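/- arXiv:2210.12313 — 5 statements merged into one kernel-verified Lean document; each statement's English description precedes it below -/
import Mathlib

section
/- A continuous function f: ℝ^d → ℂ that never vanishes, is 2π-periodic in each coordinate, and satisfies f(0)=1, has distinguished logarithm Ln f such that t ↦ Ln f(t) − i⟨t,γ⟩ is 2π-periodic in each coordinate, where γ ∈ ℤ^d is defined by γ_k = (Ln f(t + 2π e_k) − Ln f(t))/(2πi) (which is constant in t). -/
/-!
Since `exp` is `2πi`-periodic, the jump `L (t + 2π e_k) - L t` of a continuous logarithm of a
`2π e_k`-periodic function takes values in `2πiℤ`; it is continuous on the connected space `ℝ^d`,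
hence a constant `2πi γ_k`, and subtracting `i⟨t, γ⟩` removes exactly these jumps.
-/

open scoped RealInnerProductSpace

open Complex in
theorem exists_int_forall_sub_eq_of_cexp_eq {X : Type*} [TopologicalSpace X]
    [PreconnectedSpace X] {u v : X → ℂ} (hu : Continuous u) (hv : Continuous v)
    (h : ∀ x, exp (u x) = exp (v x)) :
    ∃ n : ℤ, ∀ x, u x - v x = n * (2 * Real.pi * I) := by
  have hdiff (x : X) : ∃ n : ℤ, u x - v x = n * (2 * Real.pi * I) := by
    obtain ⟨n, hn⟩ := exp_eq_exp_iff_exists_int.mp (h x)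
    exact ⟨n, by rw [hn]; ring⟩
  choose n hn using hdiff
  have him (x : X) : (u x - v x).im = n x * (2 * Real.pi) := by simp [hn x]
  obtain ⟨y, ⟨m, rfl⟩, hconst⟩ := isPreconnected_univ.eqOn_const_of_mapsTo
    (isDiscrete_iff_discreteTopology.mpr
      (inferInstance : DiscreteTopology (AddSubgroup.zmultiples (2 * Real.pi))))
    (continuous_im.comp (hu.sub hv)).continuousOn
    (fun x _ => ⟨n x, by simp [him x, zsmul_eq_mul]⟩) ⟨0, zero_mem _⟩
  refine ⟨m, fun x => ?_⟩
  have hnx : (n x : ℝ) * (2 * Real.pi) = m * (2 * Real.pi) := by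
    simpa [him x, zsmul_eq_mul] using hconst (Set.mem_univ x)
  have hnm : n x = m := by exact_mod_cast mul_right_cancel₀ Real.two_pi_pos.ne' hnx
  rw [hn x, hnm]

theorem EuclideanSpace.inner_add_smul_single_left {ι : Type*} [Fintype ι] [DecidableEq ι]
    (t : EuclideanSpace ℝ ι) (c : ℝ) (k : ι) (g : ι → ℝ) :
    ⟪t + c • EuclideanSpace.single k 1, (WithLp.equiv 2 (ι → ℝ)).symm g⟫
      = ⟪t, (WithLp.equiv 2 (ι → ℝ)).symm g⟫ + c * g k := by
  simp [inner_add_left, real_inner_smul_left, EuclideanSpace.inner_single_left]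

theorem stmt1_general (d : ℕ) (f L : EuclideanSpace ℝ (Fin d) → ℂ)
    (hper : ∀ (t : EuclideanSpace ℝ (Fin d)) (k : Fin d),
      f (t + (2 * Real.pi) • EuclideanSpace.single k 1) = f t)
    (hL : Continuous L) (hexp : ∀ t, Complex.exp (L t) = f t) :
    ∃ γ : Fin d → ℤ,
      (∀ (k : Fin d) (t : EuclideanSpace ℝ (Fin d)),
        L (t + (2 * Real.pi) • EuclideanSpace.single k 1) - L t
          = 2 * Real.pi * Complex.I * (γ k : ℂ)) ∧
      (∀ (k : Fin d) (t : EuclideanSpace ℝ (Fin d)),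
        L (t + (2 * Real.pi) • EuclideanSpace.single k 1)
            - Complex.I *
              ((⟪t + (2 * Real.pi) • EuclideanSpace.single k 1,
                  (WithLp.equiv 2 (Fin d → ℝ)).symm (fun j => (γ j : ℝ))⟫ : ℝ) : ℂ)
          = L t - Complex.I *
              ((⟪t, (WithLp.equiv 2 (Fin d → ℝ)).symm (fun j => (γ j : ℝ))⟫ : ℝ) : ℂ)) := by
  have hjump (k : Fin d) : ∃ n : ℤ, ∀ t,
      L (t + (2 * Real.pi) • EuclideanSpace.single k 1) - L t = n * (2 * Real.pi * Complex.I) :=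
    exists_int_forall_sub_eq_of_cexp_eq (hL.comp (continuous_add_const _)) hL
      fun t => by rw [hexp, hexp, hper]
  choose γ hγ using hjump
  refine ⟨γ, fun k t => by rw [hγ]; ring, fun k t => ?_⟩
  rw [EuclideanSpace.inner_add_smul_single_left]
  push_cast
  linear_combination hγ k t

/-- For a continuous nowhere-vanishing `f` on `ℝ^d` that is `2π`-periodic in each
coordinate with `f 0 = 1`, the distinguished logarithm `L` satisfies
`L (t + 2π e_k) - L t = 2πi γ_k` for a fixed `γ ∈ ℤ^d`, and
`t ↦ L t - i⟨t, γ⟩` is `2π`-periodic in each coordinate. -/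
theorem stmt1 (d : ℕ) (f L : EuclideanSpace ℝ (Fin d) → ℂ)
    (hf : Continuous f) (hfne : ∀ t, f t ≠ 0) (hf0 : f 0 = 1)
    (hper : ∀ (t : EuclideanSpace ℝ (Fin d)) (k : Fin d),
      f (t + (2 * Real.pi) • EuclideanSpace.single k 1) = f t)
    (hL : Continuous L) (hL0 : L 0 = 0) (hexp : ∀ t, Complex.exp (L t) = f t) :
    ∃ γ : Fin d → ℤ,
      (∀ (k : Fin d) (t : EuclideanSpace ℝ (Fin d)),
        L (t + (2 * Real.pi) • EuclideanSpace.single k 1) - L t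
          = 2 * Real.pi * Complex.I * (γ k : ℂ)) ∧
      (∀ (k : Fin d) (t : EuclideanSpace ℝ (Fin d)),
        L (t + (2 * Real.pi) • EuclideanSpace.single k 1)
            - Complex.I *
              ((⟪t + (2 * Real.pi) • EuclideanSpace.single k 1,
                  (WithLp.equiv 2 (Fin d → ℝ)).symm (fun j => (γ j : ℝ))⟫ : ℝ) : ℂ)
          = L t - Complex.I *
              ((⟪t, (WithLp.equiv 2 (Fin d → ℝ)).symm (fun j => (γ j : ℝ))⟫ : ℝ) : ℂ)) :=
  stmt1_general d f L hper hL hexp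
end

section
/- Suppose f(t) = exp(i⟨t,γ⟩ + Σ_{u∈U} λ_u (e^{i⟨t,u⟩} − 1)) for all t ∈ ℝ^d, where U ⊂ ℝ^d is countable with 0 ∉ U, λ_u ∈ ℂ with Σ_u |λ_u| < ∞, and γ ∈ ℝ^d. Then for any unit vector e ∈ ℝ^d, lim_{T→∞} Ln f(T e)/(iT) = ⟨γ, e⟩. Consequently, γ is uniquely determined by f. -/
/-!
The jump part `∑ λ_k (e^{i⟨t,u_k⟩} - 1)` is bounded by `2 ∑ |λ_k|` uniformly in `t`, so after
division by `iT` only the drift `⟨γ, e⟩` survives as `T → ∞`. For uniqueness, two such exponents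
of the same `f` are continuous logarithms of `f` on the connected space `ℝ^d` that vanish at `0`,
hence they coincide (exp is a covering map), and the limits identify `⟨γ, e⟩` for every `e`.
-/

open scoped RealInnerProductSpace
open Filter Complex Topology

variable {E : Type*} [NormedAddCommGroup E] [InnerProductSpace ℝ E]

noncomputable def jumpSum (u : ℕ → E) (lam : ℕ → ℂ) (t : E) : ℂ :=
  ∑' k, lam k * (exp (I * ((⟪t, u k⟫ : ℝ) : ℂ)) - 1)

noncomputable def poissonExponent (γ : E) (u : ℕ → E) (lam : ℕ → ℂ) (t : E) : ℂ :=
  I * ((⟪t, γ⟫ : ℝ) : ℂ) + jumpSum u lam t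

lemma norm_exp_I_mul_ofReal_sub_one_le_two (r : ℝ) : ‖exp (I * r) - 1‖ ≤ 2 := by
  calc ‖exp (I * r) - 1‖ ≤ ‖exp (I * r)‖ + ‖(1 : ℂ)‖ := norm_sub_le _ _
    _ = 2 := by rw [norm_exp_I_mul_ofReal, norm_one]; norm_num

section jumpSum

variable {u : ℕ → E} {lam : ℕ → ℂ}

lemma norm_jump_term_le (t : E) (k : ℕ) :
    ‖lam k * (exp (I * ((⟪t, u k⟫ : ℝ) : ℂ)) - 1)‖ ≤ 2 * ‖lam k‖ := by
  rw [norm_mul, mul_comm]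
  exact mul_le_mul_of_nonneg_right (norm_exp_I_mul_ofReal_sub_one_le_two _) (norm_nonneg _)

lemma norm_jumpSum_le (hlam : Summable fun k => ‖lam k‖) (t : E) :
    ‖jumpSum u lam t‖ ≤ ∑' k, 2 * ‖lam k‖ :=
  tsum_of_norm_bounded (hlam.mul_left 2).hasSum (norm_jump_term_le t)

lemma continuous_jumpSum (hlam : Summable fun k => ‖lam k‖) : Continuous (jumpSum u lam) :=
  continuous_tsum (fun _ => by fun_prop) (hlam.mul_left 2) fun k t => norm_jump_term_le t k

lemma tendsto_jumpSum_smul_div (hlam : Summable fun k => ‖lam k‖) (e : E) :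
    Tendsto (fun T : ℝ => jumpSum u lam (T • e) / (I * T)) atTop (𝓝 0) := by
  refine squeeze_zero_norm' (a := fun T => (∑' k, 2 * ‖lam k‖) / T) ?_
    (tendsto_const_nhds.div_atTop tendsto_id)
  filter_upwards [eventually_gt_atTop (0 : ℝ)] with T hT
  rw [norm_div, norm_mul, norm_I, one_mul, norm_real, Real.norm_of_nonneg hT.le]
  gcongr
  exact norm_jumpSum_le hlam _

end jumpSum

lemma poissonExponent_zero (γ : E) (u : ℕ → E) (lam : ℕ → ℂ) : poissonExponent γ u lam 0 = 0 := by
  simp [poissonExponent, jumpSum]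

lemma continuous_poissonExponent (γ : E) {u : ℕ → E} {lam : ℕ → ℂ}
    (hlam : Summable fun k => ‖lam k‖) : Continuous (poissonExponent γ u lam) :=
  (by fun_prop : Continuous fun t : E => I * ((⟪t, γ⟫ : ℝ) : ℂ)).add (continuous_jumpSum hlam)

lemma tendsto_poissonExponent_smul_div (γ : E) {u : ℕ → E} {lam : ℕ → ℂ}
    (hlam : Summable fun k => ‖lam k‖) (e : E) :
    Tendsto (fun T : ℝ => poissonExponent γ u lam (T • e) / (I * T)) atTop
      (𝓝 ((⟪γ, e⟫ : ℝ) : ℂ)) := by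
  have hsplit : ∀ᶠ T : ℝ in atTop, ((⟪γ, e⟫ : ℝ) : ℂ) + jumpSum u lam (T • e) / (I * T)
      = poissonExponent γ u lam (T • e) / (I * T) := by
    filter_upwards [eventually_ne_atTop (0 : ℝ)] with T hT
    have hT' : (T : ℂ) ≠ 0 := ofReal_ne_zero.mpr hT
    rw [poissonExponent, real_inner_smul_left, real_inner_comm, add_div]
    push_cast
    field_simp
  simpa only [add_zero] using (tendsto_const_nhds.add (tendsto_jumpSum_smul_div hlam e)).congr' hsplit

lemma Complex.eq_of_continuous_of_exp_eq {X : Type*} [TopologicalSpace X] [PreconnectedSpace X]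
    {g h : X → ℂ} (hg : Continuous g) (hh : Continuous h) (hexp : ∀ x, exp (g x) = exp (h x))
    (x₀ : X) (h₀ : g x₀ = h x₀) : g = h :=
  isCoveringMap_exp.eq_of_comp_eq hg hh (funext fun x => Subtype.ext (hexp x)) x₀ h₀

theorem stmt6_general (d : ℕ) (γ : EuclideanSpace ℝ (Fin d))
    (u : ℕ → EuclideanSpace ℝ (Fin d))
    (lam : ℕ → ℂ) (hlam : Summable fun k => ‖lam k‖)
    (L f : EuclideanSpace ℝ (Fin d) → ℂ)
    (hLdef : ∀ t, L t = Complex.I * ((⟪t, γ⟫ : ℝ) : ℂ)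
        + ∑' k, lam k * (Complex.exp (Complex.I * ((⟪t, u k⟫ : ℝ) : ℂ)) - 1))
    (hf : ∀ t, f t = Complex.exp (L t)) :
    (∀ e : EuclideanSpace ℝ (Fin d), ‖e‖ = 1 →
      Filter.Tendsto (fun T : ℝ => L (T • e) / (Complex.I * (T : ℂ)))
        Filter.atTop (nhds (((⟪γ, e⟫ : ℝ) : ℂ)))) ∧
    (∀ (γ₂ : EuclideanSpace ℝ (Fin d)) (u₂ : ℕ → EuclideanSpace ℝ (Fin d)) (lam₂ : ℕ → ℂ),
      Function.Injective u₂ → (∀ k, u₂ k ≠ 0) → Summable (fun k => ‖lam₂ k‖) →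
      (∀ t, f t = Complex.exp (Complex.I * ((⟪t, γ₂⟫ : ℝ) : ℂ)
          + ∑' k, lam₂ k * (Complex.exp (Complex.I * ((⟪t, u₂ k⟫ : ℝ) : ℂ)) - 1))) →
      γ₂ = γ) := by
  obtain rfl : L = poissonExponent γ u lam := funext hLdef
  refine ⟨fun e _ => tendsto_poissonExponent_smul_div γ hlam e, ?_⟩
  intro γ₂ u₂ lam₂ _ _ hlam₂ hf₂
  have hL : poissonExponent γ₂ u₂ lam₂ = poissonExponent γ u lam :=
    Complex.eq_of_continuous_of_exp_eq (continuous_poissonExponent γ₂ hlam₂)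
      (continuous_poissonExponent γ hlam) (fun t => (hf₂ t).symm.trans (hf t)) 0
      (by rw [poissonExponent_zero, poissonExponent_zero])
  refine ext_inner_right ℝ fun e => ?_
  have h₂ := tendsto_poissonExponent_smul_div γ₂ (u := u₂) hlam₂ e
  rw [hL] at h₂
  exact_mod_cast tendsto_nhds_unique h₂ (tendsto_poissonExponent_smul_div γ hlam e)

/-- If `f = exp(L)` with `L t = i⟨t,γ⟩ + Σ_u λ_u (e^{i⟨t,u⟩} − 1)` (absolutely
convergent, `0 ∉ U`), then for any unit vector `e`,
`L(Te)/(iT) → ⟨γ,e⟩` as `T → ∞`; consequently `γ` is uniquely determined. -/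
theorem stmt6 (d : ℕ) (hd : 1 ≤ d) (γ : EuclideanSpace ℝ (Fin d))
    (u : ℕ → EuclideanSpace ℝ (Fin d)) (hu : Function.Injective u) (hu0 : ∀ k, u k ≠ 0)
    (lam : ℕ → ℂ) (hlam : Summable fun k => ‖lam k‖)
    (L f : EuclideanSpace ℝ (Fin d) → ℂ)
    (hLdef : ∀ t, L t = Complex.I * ((⟪t, γ⟫ : ℝ) : ℂ)
        + ∑' k, lam k * (Complex.exp (Complex.I * ((⟪t, u k⟫ : ℝ) : ℂ)) - 1))
    (hf : ∀ t, f t = Complex.exp (L t)) :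
    (∀ e : EuclideanSpace ℝ (Fin d), ‖e‖ = 1 →
      Filter.Tendsto (fun T : ℝ => L (T • e) / (Complex.I * (T : ℂ)))
        Filter.atTop (nhds (((⟪γ, e⟫ : ℝ) : ℂ)))) ∧
    (∀ (γ₂ : EuclideanSpace ℝ (Fin d)) (u₂ : ℕ → EuclideanSpace ℝ (Fin d)) (lam₂ : ℕ → ℂ),
      Function.Injective u₂ → (∀ k, u₂ k ≠ 0) → Summable (fun k => ‖lam₂ k‖) →
      (∀ t, f t = Complex.exp (Complex.I * ((⟪t, γ₂⟫ : ℝ) : ℂ)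
          + ∑' k, lam₂ k * (Complex.exp (Complex.I * ((⟪t, u₂ k⟫ : ℝ) : ℂ)) - 1))) →
      γ₂ = γ) :=
  stmt6_general d γ u lam hlam L f hLdef hf
end

section
/- Let h: ℝ^d → ℂ be almost periodic, bounded by C, nowhere zero, h(0)=1, and suppose (t_{n_k}) is such that h(t_{n_k}+·) converges uniformly to φ with φ(τ)φ(−τ) = 0 for all τ. Then sup_{τ} |h(t_{n_k}+τ) h(t_{n_k}−τ)| → 0, and for every fixed s ∈ ℝ^d, h(2 t_{n_k} + s) → 0. -/
open Filter

/-- A function is almost periodic if every sequence of translates has a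
subsequence converging uniformly to a continuous function. -/
def AlmostPeriodic {d : ℕ} (h : EuclideanSpace ℝ (Fin d) → ℂ) : Prop :=
  ∀ s : ℕ → EuclideanSpace ℝ (Fin d),
    ∃ (k : ℕ → ℕ) (φ : EuclideanSpace ℝ (Fin d) → ℂ), StrictMono k ∧ Continuous φ ∧
      TendstoUniformly (fun n t => h (t + s (k n))) φ atTop

/-!
Write `h(t_k + τ) h(t_k − τ) − φ(τ) φ(−τ)` as
`(h(t_k + τ) − φ(τ)) h(t_k − τ) + φ(τ) (h(t_k − τ) − φ(−τ))`; since `h` and `φ` are bounded,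
this tends to `0` uniformly in `τ`, and `φ(τ) φ(−τ) = 0`. Evaluating at `τ = t_k + s` gives
`h(2 t_k + s) h(−s) → 0`, and `h(−s) ≠ 0`.
-/

theorem TendstoUniformly.mul_of_bounded {ι α R : Type*} [NonUnitalSeminormedRing R]
    {p : Filter ι} {F G : ι → α → R} {f g : α → R} {C : ℝ}
    (hF : TendstoUniformly F f p) (hG : TendstoUniformly G g p)
    (hGC : ∀ i x, ‖G i x‖ ≤ C) (hfC : ∀ x, ‖f x‖ ≤ C) :
    TendstoUniformly (fun i x => F i x * G i x) (fun x => f x * g x) p := by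
  rw [Metric.tendstoUniformly_iff] at hF hG ⊢
  intro ε hε
  -- `C` itself may be nonpositive (e.g. for empty `α`)
  set K := |C| + 1
  have hK : 0 < K := by positivity
  have hCK : C ≤ K := by linarith [le_abs_self C]
  have hδ : 0 < ε / (2 * K) := by positivity
  filter_upwards [hF _ hδ, hG _ hδ] with i hFi hGi x
  simp only [dist_eq_norm'] at hFi hGi ⊢
  calc ‖F i x * G i x - f x * g x‖
      = ‖(F i x - f x) * G i x + f x * (G i x - g x)‖ := by congr 1; noncomm_ring
    _ ≤ ‖F i x - f x‖ * K + K * ‖G i x - g x‖ :=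
      norm_add_le_of_le (norm_mul_le_of_le le_rfl ((hGC i x).trans hCK))
        (norm_mul_le_of_le ((hfC x).trans hCK) le_rfl)
    _ < ε / (2 * K) * K + K * (ε / (2 * K)) := by gcongr; exacts [hFi x, hGi x]
    _ = ε := by field_simp; ring

theorem TendstoUniformly.tendsto_apply_of_const {ι α β : Type*} [UniformSpace β]
    {p : Filter ι} {F : ι → α → β} {c : β} (hF : TendstoUniformly F (fun _ => c) p)
    (g : ι → α) : Tendsto (fun i => F i (g i)) p (nhds c) :=
  Uniform.tendsto_nhds_right.2 <|
    (tendstoUniformly_iff_tendsto.1 hF).comp (tendsto_id.prodMk tendsto_top)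

theorem stmt11_general (d : ℕ) (h : EuclideanSpace ℝ (Fin d) → ℂ) (C : ℝ)
    (hC : ∀ t, ‖h t‖ ≤ C) (hne : ∀ t, h t ≠ 0)
    (t : ℕ → EuclideanSpace ℝ (Fin d)) (φ : EuclideanSpace ℝ (Fin d) → ℂ)
    (hunif : TendstoUniformly (fun k τ => h (t k + τ)) φ atTop)
    (hφ0 : ∀ τ, φ τ * φ (-τ) = 0) :
    TendstoUniformly (fun k τ => h (t k + τ) * h (t k - τ)) 0 atTop ∧
    ∀ s : EuclideanSpace ℝ (Fin d),
      Tendsto (fun k => h ((2 : ℝ) • t k + s)) atTop (nhds 0) := by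
  have hφC : ∀ τ, ‖φ τ‖ ≤ C := fun τ =>
    le_of_tendsto' (hunif.tendsto_at τ).norm fun k => hC _
  have hprod : TendstoUniformly (fun k τ => h (t k + τ) * h (t k - τ)) 0 atTop := by
    have := hunif.mul_of_bounded (hunif.comp Neg.neg) (fun _ _ => hC _) hφC
    simp only [Function.comp_apply, ← sub_eq_add_neg, hφ0] at this
    exact this
  refine ⟨hprod, fun s => ?_⟩
  have hdiag : Tendsto (fun k => h ((2 : ℝ) • t k + s) * h (-s)) atTop (nhds 0) := by
    have := hprod.tendsto_apply_of_const (c := 0) (fun k => t k + s)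
    simpa only [two_smul, ← add_assoc, sub_add_eq_sub_sub, sub_self, zero_sub] using this
  simpa [hne] using hdiag.mul_const (h (-s))⁻¹

/-- If the translates `h(t_k + ·)` converge uniformly to `φ` with
`φ(τ)φ(−τ) ≡ 0`, then `sup_τ |h(t_k+τ)h(t_k−τ)| → 0`, and for every fixed `s`,
`h(2t_k + s) → 0`. -/
theorem stmt11 (d : ℕ) (h : EuclideanSpace ℝ (Fin d) → ℂ) (C : ℝ)
    (hcont : Continuous h) (hap : AlmostPeriodic h)
    (hC : ∀ t, ‖h t‖ ≤ C) (hne : ∀ t, h t ≠ 0) (h0 : h 0 = 1)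
    (t : ℕ → EuclideanSpace ℝ (Fin d)) (φ : EuclideanSpace ℝ (Fin d) → ℂ)
    (hφc : Continuous φ)
    (hunif : TendstoUniformly (fun k τ => h (t k + τ)) φ atTop)
    (hφ0 : ∀ τ, φ τ * φ (-τ) = 0) :
    TendstoUniformly (fun k τ => h (t k + τ) * h (t k - τ)) 0 atTop ∧
    ∀ s : EuclideanSpace ℝ (Fin d),
      Tendsto (fun k => h ((2 : ℝ) • t k + s)) atTop (nhds 0) :=
  stmt11_general d h C hC hne t φ hunif hφ0
end

section
/- A function h: ℝ^d → ℂ admitting a Lévy-type representation h(t) = exp(i⟨t,γ⟩ − ½⟨t,Qt⟩ + ∫(e^{i⟨t,u⟩} − 1 − i⟨t,u⟩/(1+‖u‖²)) dν(u)) with the stated integrability conditions, and which is additionally almost periodic with absolutely convergent Fourier series Σ q_y e^{i⟨t,y⟩}, Σ|q_y| < ∞, Σ q_y = 1, must satisfy inf_{t∈ℝ^d} |h(t)| > 0. -/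
open scoped RealInnerProductSpace
open MeasureTheory Filter Topology

/- Auxiliary definitions and lemmas -/

/-- The Lévy-type integrand. -/
noncomputable def Kf {d : ℕ} (g : EuclideanSpace ℝ (Fin d) → ℂ) (v u : EuclideanSpace ℝ (Fin d)) : ℂ :=
  (Complex.exp (Complex.I * ((⟪v, u⟫ : ℝ) : ℂ)) - 1
      - Complex.I * ((⟪v, u⟫ : ℝ) : ℂ) / (1 + (‖u‖ : ℂ) ^ 2)) * g u

/-- The quadratic form. -/
noncomputable def Tq {d : ℕ} (Q : Matrix (Fin d) (Fin d) ℂ) (v : EuclideanSpace ℝ (Fin d)) : ℂ :=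
  ∑ j, (v j : ℂ) * Q.mulVec (fun i => (v i : ℂ)) j

/-- The combined integrand appearing in the second difference of the exponent. -/
noncomputable def Jf {d : ℕ} (g : EuclideanSpace ℝ (Fin d) → ℂ) (s t u : EuclideanSpace ℝ (Fin d)) : ℂ :=
  (2 * Complex.exp (Complex.I * (((⟪s, u⟫ : ℝ) + (⟪t, u⟫ : ℝ) : ℝ) : ℂ))
    - Complex.exp (Complex.I * (((⟪s, u⟫ : ℝ) + (⟪t, u⟫ : ℝ) + (⟪t, u⟫ : ℝ) : ℝ) : ℂ))
    - Complex.exp (Complex.I * ((⟪s, u⟫ : ℝ) : ℂ))) * g u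

lemma expI_norm (b : ℝ) : ‖Complex.exp (Complex.I * (b : ℂ))‖ = 1 := by
  rw [mul_comm]; exact Complex.norm_exp_ofReal_mul_I b

lemma expI_sub_one_le (b : ℝ) : ‖Complex.exp (Complex.I * (b : ℂ)) - 1‖ ≤ 2 * min |b| 1 := by
  rcases le_total |b| 1 with hb | hb
  · rw [min_eq_left hb]
    have := Complex.norm_exp_sub_one_le (x := Complex.I * b) (by simpa using hb)
    simpa [Complex.norm_I] using this
  · rw [min_eq_right hb, mul_one]
    calc ‖Complex.exp (Complex.I * (b:ℂ)) - 1‖ ≤ ‖Complex.exp (Complex.I * (b:ℂ))‖ + ‖(1:ℂ)‖ :=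
          norm_sub_le _ _
      _ ≤ 2 := by rw [expI_norm]; norm_num

lemma expI_sub_one_sub_le (b : ℝ) :
    ‖Complex.exp (Complex.I * (b : ℂ)) - 1 - Complex.I * b‖ ≤ 3 * b ^ 2 := by
  rcases le_total |b| 1 with hb | hb
  · have := Complex.norm_exp_sub_one_sub_id_le (x := Complex.I * b) (by simpa using hb)
    have h2 : ‖Complex.I * (b:ℂ)‖ ^ 2 = b ^ 2 := by simp [Complex.norm_I, sq_abs]
    calc ‖Complex.exp (Complex.I * (b:ℂ)) - 1 - Complex.I * b‖ ≤ b ^ 2 := by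
          rw [h2] at this; exact this
      _ ≤ 3 * b ^ 2 := by nlinarith [sq_nonneg b]
  · calc ‖Complex.exp (Complex.I * (b:ℂ)) - 1 - Complex.I * b‖
        ≤ ‖Complex.exp (Complex.I * (b:ℂ)) - 1‖ + ‖Complex.I * (b:ℂ)‖ := norm_sub_le _ _
    _ ≤ 2 + |b| := by
        gcongr
        · calc _ ≤ ‖Complex.exp (Complex.I * (b:ℂ))‖ + ‖(1:ℂ)‖ := norm_sub_le _ _
            _ ≤ 2 := by rw [expI_norm]; norm_num
        · simp [Complex.norm_I]
    _ ≤ 3 * b ^ 2 := by nlinarith [sq_abs b, abs_nonneg b]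

lemma coord_le_norm {d : ℕ} (t : EuclideanSpace ℝ (Fin d)) (j : Fin d) : |t j| ≤ ‖t‖ := by
  rw [EuclideanSpace.norm_eq, ← Real.sqrt_sq_eq_abs]
  apply Real.sqrt_le_sqrt
  simpa using Finset.single_le_sum (f := fun i => t i ^ 2) (fun i _ => sq_nonneg _)
    (Finset.mem_univ j)

lemma Kf_meas {d : ℕ} (g : EuclideanSpace ℝ (Fin d) → ℂ) (hg : Measurable g)
    (v : EuclideanSpace ℝ (Fin d)) : Measurable (Kf g v) := by
  apply Measurable.mul _ hg
  have hinner : Measurable fun u : EuclideanSpace ℝ (Fin d) => (⟪v, u⟫ : ℝ) :=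
    (continuous_const.inner continuous_id).measurable
  fun_prop

lemma Kf_bound {d : ℕ} (g : EuclideanSpace ℝ (Fin d) → ℂ) (hgnorm : ∀ u, ‖g u‖ = 1)
    (v u : EuclideanSpace ℝ (Fin d)) :
    ‖Kf g v u‖ ≤ (3 * ‖v‖ ^ 2 + ‖v‖ + 2) * min (‖u‖ ^ 2) 1 := by
  have hx : |(⟪v, u⟫ : ℝ)| ≤ ‖v‖ * ‖u‖ := abs_real_inner_le_norm v u
  set x : ℝ := (⟪v, u⟫ : ℝ) with hxdef
  set r : ℝ := ‖u‖ with hrdef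
  have hr0 : 0 ≤ r := norm_nonneg u
  have hv0 : 0 ≤ ‖v‖ := norm_nonneg v
  have hKnorm : ‖Kf g v u‖
      = ‖Complex.exp (Complex.I * (x:ℂ)) - 1 - Complex.I * (x:ℂ) / (1 + (r:ℂ)^2)‖ := by
    rw [Kf, norm_mul, hgnorm, mul_one]
  have hden : (1 : ℂ) + (r:ℂ)^2 ≠ 0 := by
    have : ((1 + r^2 : ℝ) : ℂ) ≠ 0 := by
      exact_mod_cast (by positivity : (1 + r^2 : ℝ) ≠ 0)
    push_cast at this; exact this
  rcases le_total r 1 with hr | hr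
  · have hmin : min (r^2) 1 = r^2 := min_eq_left (by nlinarith)
    have hsplit : Complex.exp (Complex.I * (x:ℂ)) - 1 - Complex.I * (x:ℂ) / (1 + (r:ℂ)^2)
        = (Complex.exp (Complex.I * (x:ℂ)) - 1 - Complex.I * (x:ℂ))
          + Complex.I * (x:ℂ) * (((r^2 / (1 + r^2) : ℝ)) : ℂ) := by
      push_cast
      field_simp
      ring
    have h1 : ‖Complex.exp (Complex.I * (x:ℂ)) - 1 - Complex.I * (x:ℂ)‖ ≤ 3 * x^2 :=
      expI_sub_one_sub_le x
    have h2 : ‖Complex.I * (x:ℂ) * (((r^2 / (1 + r^2) : ℝ)) : ℂ)‖ ≤ |x| * r^2 := by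
      rw [norm_mul, norm_mul]
      simp only [Complex.norm_I, Complex.norm_real, Real.norm_eq_abs, one_mul]
      have hq : |r^2 / (1 + r^2)| ≤ r^2 := by
        rw [abs_of_nonneg (by positivity), div_le_iff₀ (by positivity)]
        nlinarith
      have := mul_le_mul_of_nonneg_left hq (abs_nonneg x)
      linarith
    rw [hKnorm, hsplit, hmin]
    have h3 := (norm_add_le (Complex.exp (Complex.I * (x:ℂ)) - 1 - Complex.I * (x:ℂ))
      (Complex.I * (x:ℂ) * (((r^2 / (1 + r^2) : ℝ)) : ℂ)))
    have hx2 : x^2 ≤ (‖v‖ * r)^2 := by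
      have := sq_abs x
      nlinarith [sq_le_sq' (neg_le_of_neg_le (by linarith [abs_nonneg x, neg_abs_le x, hx])) hx]
    have h4 : |x| * r^2 ≤ ‖v‖ * r * r^2 := mul_le_mul_of_nonneg_right hx (sq_nonneg r)
    have h5 : ‖v‖ * r * r^2 ≤ ‖v‖ * r^2 := by nlinarith [mul_nonneg hv0 (sq_nonneg r)]
    nlinarith [abs_nonneg x, mul_nonneg hv0 hr0, sq_nonneg r]
  · have hmin : min (r^2) 1 = 1 := min_eq_right (by nlinarith)
    rw [hKnorm, hmin, mul_one]
    calc ‖Complex.exp (Complex.I * (x:ℂ)) - 1 - Complex.I * (x:ℂ) / (1 + (r:ℂ)^2)‖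
        ≤ ‖Complex.exp (Complex.I * (x:ℂ)) - 1‖ + ‖Complex.I * (x:ℂ) / (1 + (r:ℂ)^2)‖ :=
          norm_sub_le _ _
      _ ≤ 2 + ‖v‖ := by
          gcongr
          · calc _ ≤ ‖Complex.exp (Complex.I * (x:ℂ))‖ + ‖(1:ℂ)‖ := norm_sub_le _ _
              _ ≤ 2 := by rw [expI_norm]; norm_num
          · have heq : Complex.I * (x:ℂ) / (1 + (r:ℂ)^2) = Complex.I * (((x / (1+r^2) : ℝ)):ℂ) := by
              push_cast; field_simp
            rw [heq, norm_mul]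
            simp only [Complex.norm_I, Complex.norm_real, Real.norm_eq_abs, one_mul]
            rw [abs_div, abs_of_nonneg (by positivity : (0:ℝ) ≤ 1 + r^2)]
            rw [div_le_iff₀ (by positivity)]
            calc |x| ≤ ‖v‖ * r := hx
              _ ≤ ‖v‖ * (1 + r^2) := by
                  nlinarith [mul_nonneg hv0 (by nlinarith : (0:ℝ) ≤ 1 - r + r^2)]
      _ ≤ 3 * ‖v‖^2 + ‖v‖ + 2 := by nlinarith

lemma lin_id {d : ℕ} (γ : Fin d → ℂ) (s t : EuclideanSpace ℝ (Fin d)) :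
    2 * ∑ j, (((s + t) j : ℝ) : ℂ) * γ j
      = (∑ j, (((s + t + t) j : ℝ) : ℂ) * γ j) + ∑ j, ((s j : ℝ) : ℂ) * γ j := by
  rw [Finset.mul_sum, ← Finset.sum_add_distrib]
  refine Finset.sum_congr rfl fun j _ => ?_
  simp only [PiLp.add_apply]
  push_cast
  ring

lemma quad_id {d : ℕ} (Q : Matrix (Fin d) (Fin d) ℂ) (s t : EuclideanSpace ℝ (Fin d)) :
    2 * Tq Q (s + t) - Tq Q (s + t + t) - Tq Q s = -2 * Tq Q t := by
  simp only [Tq, Matrix.mulVec, dotProduct, PiLp.add_apply, Finset.mul_sum,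
    ← Finset.sum_sub_distrib, neg_mul, ← Finset.sum_neg_distrib]
  refine Finset.sum_congr rfl fun j _ => ?_
  refine Finset.sum_congr rfl fun i _ => ?_
  push_cast
  ring

lemma Jf_eq {d : ℕ} (g : EuclideanSpace ℝ (Fin d) → ℂ) (s t u : EuclideanSpace ℝ (Fin d)) :
    Jf g s t u = 2 * Kf g (s + t) u - Kf g (s + t + t) u - Kf g s u := by
  have hden : (1 : ℂ) + (‖u‖:ℂ)^2 ≠ 0 := by
    have : ((1 + ‖u‖^2 : ℝ) : ℂ) ≠ 0 := by
      exact_mod_cast (by positivity : (1 + ‖u‖^2 : ℝ) ≠ 0)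
    push_cast at this; exact this
  simp only [Jf, Kf, inner_add_left]
  push_cast
  field_simp
  ring

lemma Jf_bound {d : ℕ} (g : EuclideanSpace ℝ (Fin d) → ℂ) (hgnorm : ∀ u, ‖g u‖ = 1)
    (s t u : EuclideanSpace ℝ (Fin d)) :
    ‖Jf g s t u‖ ≤ (4 * ‖t‖ ^ 2 + 4) * min (‖u‖ ^ 2) 1 := by
  set a : ℝ := (⟪s, u⟫ : ℝ)
  set b : ℝ := (⟪t, u⟫ : ℝ) with hbdef
  have hfac : (2 * Complex.exp (Complex.I * ((a + b : ℝ) : ℂ))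
      - Complex.exp (Complex.I * ((a + b + b : ℝ) : ℂ))
      - Complex.exp (Complex.I * ((a : ℝ) : ℂ)))
      = -(Complex.exp (Complex.I * (a : ℂ))
          * (Complex.exp (Complex.I * (b : ℂ)) - 1) ^ 2) := by
    push_cast
    rw [show Complex.I * ((a:ℂ) + (b:ℂ)) = Complex.I * (a:ℂ) + Complex.I * (b:ℂ) by ring,
      show Complex.I * ((a:ℂ) + (b:ℂ) + (b:ℂ))
        = Complex.I * (a:ℂ) + Complex.I * (b:ℂ) + Complex.I * (b:ℂ) by ring,
      Complex.exp_add, Complex.exp_add, Complex.exp_add]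
    ring
  have hb : |b| ≤ ‖t‖ * ‖u‖ := abs_real_inner_le_norm t u
  have he1 : ‖Complex.exp (Complex.I * (b : ℂ)) - 1‖ ≤ 2 * min |b| 1 := expI_sub_one_le b
  rw [Jf, norm_mul, hgnorm, mul_one]
  rw [hfac, norm_neg, norm_mul, norm_pow, expI_norm, one_mul]
  have h2 : ‖Complex.exp (Complex.I * (b : ℂ)) - 1‖ ^ 2 ≤ 4 * (min |b| 1) ^ 2 := by
    nlinarith [norm_nonneg (Complex.exp (Complex.I * (b : ℂ)) - 1),
      le_min (abs_nonneg b) zero_le_one]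
  have h3 : (min |b| 1) ^ 2 ≤ (‖t‖ ^ 2 + 1) * min (‖u‖ ^ 2) 1 := by
    have ht0 : 0 ≤ ‖t‖ := norm_nonneg t
    have hu0 : 0 ≤ ‖u‖ := norm_nonneg u
    rcases le_total ‖u‖ 1 with hu | hu
    · have hmin : min (‖u‖^2) 1 = ‖u‖^2 := min_eq_left (by nlinarith)
      rw [hmin]
      have : (min |b| 1) ^ 2 ≤ b ^ 2 := by
        have h4 : min |b| 1 ≤ |b| := min_le_left _ _
        have h5 : 0 ≤ min |b| 1 := le_min (abs_nonneg b) zero_le_one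
        nlinarith [sq_abs b]
      have hb2 : b ^ 2 ≤ (‖t‖ * ‖u‖) ^ 2 := by
        nlinarith [sq_abs b, mul_le_mul hb hb (abs_nonneg b) (mul_nonneg ht0 hu0)]
      nlinarith [sq_nonneg ‖u‖]
    · have hmin : min (‖u‖^2) 1 = 1 := min_eq_right (by nlinarith)
      rw [hmin, mul_one]
      have h4 : min |b| 1 ≤ 1 := min_le_right _ _
      have h5 : 0 ≤ min |b| 1 := le_min (abs_nonneg b) zero_le_one
      nlinarith
  calc ‖Complex.exp (Complex.I * (b : ℂ)) - 1‖ ^ 2 ≤ 4 * ((‖t‖ ^ 2 + 1) * min (‖u‖ ^ 2) 1) := by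
        nlinarith
    _ = (4 * ‖t‖ ^ 2 + 4) * min (‖u‖ ^ 2) 1 := by ring

lemma Tq_bound {d : ℕ} (Q : Matrix (Fin d) (Fin d) ℂ) (t : EuclideanSpace ℝ (Fin d)) :
    ‖Tq Q t‖ ≤ (∑ j, ∑ i, ‖Q j i‖) * ‖t‖ ^ 2 := by
  have hcoord : ∀ j, ‖((t j : ℝ) : ℂ)‖ ≤ ‖t‖ := fun j => by
    rw [Complex.norm_real, Real.norm_eq_abs]; exact coord_le_norm t j
  calc ‖Tq Q t‖ ≤ ∑ j, ‖(t j : ℂ) * Q.mulVec (fun i => (t i : ℂ)) j‖ := norm_sum_le _ _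
    _ ≤ ∑ j, ∑ i, ‖Q j i‖ * ‖t‖ ^ 2 := by
        refine Finset.sum_le_sum fun j _ => ?_
        have hB : ‖Q.mulVec (fun i => (t i : ℂ)) j‖ ≤ ∑ i, ‖Q j i‖ * ‖t‖ := by
          calc ‖Q.mulVec (fun i => (t i : ℂ)) j‖ ≤ ∑ i, ‖Q j i * (t i : ℂ)‖ := by
                rw [Matrix.mulVec, dotProduct]; exact norm_sum_le _ _
            _ ≤ ∑ i, ‖Q j i‖ * ‖t‖ := by
                refine Finset.sum_le_sum fun i _ => ?_
                rw [norm_mul]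
                exact mul_le_mul_of_nonneg_left (hcoord i) (norm_nonneg _)
        calc ‖(t j : ℂ) * Q.mulVec (fun i => (t i : ℂ)) j‖
            = ‖((t j : ℝ) : ℂ)‖ * ‖Q.mulVec (fun i => (t i : ℂ)) j‖ := norm_mul _ _
          _ ≤ ‖t‖ * ∑ i, ‖Q j i‖ * ‖t‖ :=
              mul_le_mul (hcoord j) hB (norm_nonneg _) (norm_nonneg t)
          _ = ∑ i, ‖Q j i‖ * ‖t‖ ^ 2 := by
              rw [Finset.mul_sum]; exact Finset.sum_congr rfl fun i _ => by ring
    _ = (∑ j, ∑ i, ‖Q j i‖) * ‖t‖ ^ 2 := by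
        rw [Finset.sum_mul]; exact Finset.sum_congr rfl fun j _ => (Finset.sum_mul _ _ _).symm

/-- If `h` has an absolutely convergent Fourier series `Σ q_y e^{i⟨t,y⟩}` with
`Σ q_y = 1` (so `h` is almost periodic), and also admits a Lévy-type
representation (complex measure `ν = g • σ`, `σ = |ν|`, `‖g‖ = 1`), then
`inf_t |h(t)| > 0`. -/
theorem stmt12 (d : ℕ) (hd : 1 ≤ d)
    (y : ℕ → EuclideanSpace ℝ (Fin d)) (hy : Function.Injective y)
    (q : ℕ → ℂ) (hq : Summable fun k => ‖q k‖) (hqpos : 0 < ∑' k, ‖q k‖)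
    (hq1 : ∑' k, q k = 1)
    (h : EuclideanSpace ℝ (Fin d) → ℂ)
    (hh : ∀ t, h t = ∑' k, q k * Complex.exp (Complex.I * ((⟪t, y k⟫ : ℝ) : ℂ)))
    (hap : AlmostPeriodic h)
    (γ : Fin d → ℂ) (Q : Matrix (Fin d) (Fin d) ℂ)
    (σ : Measure (EuclideanSpace ℝ (Fin d))) (g : EuclideanSpace ℝ (Fin d) → ℂ)
    (hg : Measurable g) (hgnorm : ∀ u, ‖g u‖ = 1)
    (hσ0 : σ {0} = 0)
    (hσint : Integrable (fun u => min (‖u‖ ^ 2) 1) σ)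
    (hLevy : ∀ t, h t = Complex.exp
      (Complex.I * ∑ j, (t j : ℂ) * γ j
        - (1 / 2) * ∑ j, (t j : ℂ) * Q.mulVec (fun i => (t i : ℂ)) j
        + ∫ u, (Complex.exp (Complex.I * ((⟪t, u⟫ : ℝ) : ℂ)) - 1
            - Complex.I * ((⟪t, u⟫ : ℝ) : ℂ) / (1 + (‖u‖ : ℂ) ^ 2)) * g u ∂σ)) :
    ∃ μ : ℝ, 0 < μ ∧ ∀ t, μ ≤ ‖h t‖ := by
  classical
  set L : EuclideanSpace ℝ (Fin d) → ℂ := fun v =>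
    Complex.I * ∑ j, (v j : ℂ) * γ j - (1 / 2) * Tq Q v + ∫ u, Kf g v u ∂σ with hLdef
  have hL : ∀ v, h v = Complex.exp (L v) := fun v => hLevy v
  have hKint : ∀ v, Integrable (Kf g v) σ := fun v =>
    (hσint.const_mul (3 * ‖v‖ ^ 2 + ‖v‖ + 2)).mono'
      (Kf_meas g hg v).aestronglyMeasurable
      (ae_of_all _ fun u => Kf_bound g hgnorm v u)
  have hJint : ∀ s t, Integrable (Jf g s t) σ := fun s t =>
    ((((hKint (s + t)).const_mul 2).sub (hKint (s + t + t))).sub (hKint s)).congr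
      (ae_of_all _ fun u => (Jf_eq g s t u).symm)
  have hJint_eq : ∀ s t : EuclideanSpace ℝ (Fin d),
      ∫ u, Jf g s t u ∂σ = 2 * ∫ u, Kf g (s + t) u ∂σ
        - ∫ u, Kf g (s + t + t) u ∂σ - ∫ u, Kf g s u ∂σ := by
    intro s t
    rw [integral_congr_ae (ae_of_all _ (Jf_eq g s t))]
    have i1 : Integrable (fun a => 2 * Kf g (s + t) a) σ := (hKint (s + t)).const_mul 2
    have i2 : Integrable (fun a => 2 * Kf g (s + t) a - Kf g (s + t + t) a) σ :=
      i1.sub (hKint (s + t + t))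
    rw [integral_sub i2 (hKint s), integral_sub i1 (hKint (s + t + t)), integral_const_mul]
  have hcomb : ∀ s t : EuclideanSpace ℝ (Fin d),
      2 * L (s + t) = L (s + t + t) + L s + (Tq Q t + ∫ u, Jf g s t u ∂σ) := by
    intro s t
    rw [hJint_eq s t]
    simp only [hLdef]
    linear_combination Complex.I * lin_id γ s t - (1 / 2) * quad_id Q s t
  -- upper bound on h from the Fourier side
  set S := ∑' k, ‖q k‖ with hSdef
  have hS : ∀ v, ‖h v‖ ≤ S := by
    intro v
    rw [hh v]
    have h1 : ∀ k, ‖q k * Complex.exp (Complex.I * ((⟪v, y k⟫ : ℝ) : ℂ))‖ = ‖q k‖ := fun k => by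
      rw [norm_mul, expI_norm, mul_one]
    calc ‖∑' k, q k * Complex.exp (Complex.I * ((⟪v, y k⟫ : ℝ) : ℂ))‖
        ≤ ∑' k, ‖q k * Complex.exp (Complex.I * ((⟪v, y k⟫ : ℝ) : ℂ))‖ :=
          norm_tsum_le_tsum_norm (hq.congr fun k => (h1 k).symm)
      _ = S := tsum_congr h1
  have hS0 : 0 < S := hqpos
  set A := ∑ j, ∑ i, ‖Q j i‖ with hAdef
  have hA0 : 0 ≤ A := Finset.sum_nonneg fun j _ => Finset.sum_nonneg fun i _ => norm_nonneg _
  set Iσ := ∫ u, min (‖u‖ ^ 2) 1 ∂σ with hIdef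
  have hIσ0 : 0 ≤ Iσ := integral_nonneg fun u => le_min (sq_nonneg _) zero_le_one
  set C : ℝ → ℝ := fun R => A * R ^ 2 + (4 * R ^ 2 + 4) * Iσ with hCdef
  have hCmono : ∀ a b₀ : ℝ, 0 ≤ a → a ≤ b₀ → C a ≤ C b₀ := by
    intro a b₀ ha hab
    simp only [hCdef]
    nlinarith [mul_le_mul_of_nonneg_left (by nlinarith : a ^ 2 ≤ b₀ ^ 2) hA0,
      mul_le_mul_of_nonneg_left (by nlinarith : a ^ 2 ≤ b₀ ^ 2) hIσ0]
  -- the key inequality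
  have hkey : ∀ s t : EuclideanSpace ℝ (Fin d),
      ‖h (s + t)‖ ^ 2 ≤ S * ‖h s‖ * Real.exp (C ‖t‖) := by
    intro s t
    have he : (h (s + t)) ^ 2 = h (s + t + t) * h s * Complex.exp (Tq Q t + ∫ u, Jf g s t u ∂σ) := by
      rw [hL (s + t), sq, ← Complex.exp_add, ← two_mul, hcomb s t, Complex.exp_add,
        Complex.exp_add, ← hL, ← hL]
    have heq : ‖h (s + t)‖ ^ 2
        = ‖h (s + t + t)‖ * ‖h s‖ * Real.exp ((Tq Q t + ∫ u, Jf g s t u ∂σ).re) := by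
      rw [← norm_pow, he, norm_mul, norm_mul,
        Complex.norm_exp]
    have hre : (Tq Q t + ∫ u, Jf g s t u ∂σ).re ≤ C ‖t‖ := by
      have h1 : (Tq Q t + ∫ u, Jf g s t u ∂σ).re ≤ ‖Tq Q t + ∫ u, Jf g s t u ∂σ‖ :=
        Complex.re_le_norm _
      have h2 : ‖Tq Q t + ∫ u, Jf g s t u ∂σ‖ ≤ ‖Tq Q t‖ + ‖∫ u, Jf g s t u ∂σ‖ :=
        norm_add_le _ _
      have h3 : ‖∫ u, Jf g s t u ∂σ‖ ≤ (4 * ‖t‖ ^ 2 + 4) * Iσ := by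
        calc ‖∫ u, Jf g s t u ∂σ‖ ≤ ∫ u, ‖Jf g s t u‖ ∂σ := norm_integral_le_integral_norm _
          _ ≤ ∫ u, (4 * ‖t‖ ^ 2 + 4) * min (‖u‖ ^ 2) 1 ∂σ := by
              refine integral_mono (hJint s t).norm (hσint.const_mul _) ?_
              exact fun u => Jf_bound g hgnorm s t u
          _ = (4 * ‖t‖ ^ 2 + 4) * Iσ := by rw [hIdef, integral_const_mul]
      have h4 := Tq_bound Q t
      simp only [hCdef]
      calc (Tq Q t + ∫ u, Jf g s t u ∂σ).re ≤ ‖Tq Q t‖ + ‖∫ u, Jf g s t u ∂σ‖ := h1.trans h2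
        _ ≤ A * ‖t‖ ^ 2 + (4 * ‖t‖ ^ 2 + 4) * Iσ := by rw [hAdef]; exact add_le_add h4 h3
    rw [heq]
    have e1 : Real.exp ((Tq Q t + ∫ u, Jf g s t u ∂σ).re) ≤ Real.exp (C ‖t‖) :=
      Real.exp_le_exp.mpr hre
    have e2 : ‖h (s + t + t)‖ * ‖h s‖ ≤ S * ‖h s‖ :=
      mul_le_mul_of_nonneg_right (hS _) (norm_nonneg _)
    exact mul_le_mul e2 e1 (Real.exp_pos _).le (mul_nonneg hS0.le (norm_nonneg _))
  -- now the contradiction argument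
  by_contra hcon
  push_neg at hcon
  have hchoice : ∀ n : ℕ, ∃ v : EuclideanSpace ℝ (Fin d),
      ‖h v‖ < ((n : ℝ) + 1)⁻¹ ^ 2 / (S * Real.exp (C n) + 1) := by
    intro n
    have hSE : 0 < S * Real.exp (C n) := mul_pos hS0 (Real.exp_pos _)
    exact hcon _ (by positivity)
  choose sfun hsfun using hchoice
  have hsmall : ∀ n : ℕ, ∀ t : EuclideanSpace ℝ (Fin d), ‖t‖ ≤ n →
      ‖h (t + sfun n)‖ < ((n : ℝ) + 1)⁻¹ := by
    intro n t ht
    have hSE : 0 < S * Real.exp (C n) := mul_pos hS0 (Real.exp_pos _)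
    have h1 : ‖h (sfun n + t)‖ ^ 2 ≤ S * ‖h (sfun n)‖ * Real.exp (C ‖t‖) := hkey (sfun n) t
    have h2 : Real.exp (C ‖t‖) ≤ Real.exp (C n) :=
      Real.exp_le_exp.mpr (hCmono _ _ (norm_nonneg t) ht)
    have h3 : ‖h (sfun n + t)‖ ^ 2 < ((n : ℝ) + 1)⁻¹ ^ 2 := by
      have h4 : S * ‖h (sfun n)‖ * Real.exp (C ‖t‖) ≤ S * ‖h (sfun n)‖ * Real.exp (C n) := by
        gcongr
      have h5 : S * ‖h (sfun n)‖ * Real.exp (C n)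
          < S * (((n : ℝ) + 1)⁻¹ ^ 2 / (S * Real.exp (C n) + 1)) * Real.exp (C n) := by
        have := hsfun n
        have hn0 : (0:ℝ) < ‖h (sfun n)‖ := by
          by_contra hz
          push_neg at hz
          have : ‖h (sfun n)‖ = 0 := le_antisymm hz (norm_nonneg _)
          rw [hL (sfun n)] at this
          simp [Complex.norm_exp] at this
        have := mul_lt_mul_of_pos_left (hsfun n) hS0
        exact mul_lt_mul_of_pos_right this (Real.exp_pos _)
      have h6 : S * (((n : ℝ) + 1)⁻¹ ^ 2 / (S * Real.exp (C n) + 1)) * Real.exp (C n)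
          ≤ ((n : ℝ) + 1)⁻¹ ^ 2 := by
        have hp : (0:ℝ) ≤ ((n : ℝ) + 1)⁻¹ ^ 2 := by positivity
        have hD : (0:ℝ) < S * Real.exp (C n) + 1 := by linarith
        have hrw : S * (((n : ℝ) + 1)⁻¹ ^ 2 / (S * Real.exp (C n) + 1)) * Real.exp (C n)
            = (S * Real.exp (C n)) * ((n : ℝ) + 1)⁻¹ ^ 2 / (S * Real.exp (C n) + 1) := by
          ring
        rw [hrw, div_le_iff₀ hD]
        nlinarith
      linarith
    have h7 : ‖h (sfun n + t)‖ < ((n : ℝ) + 1)⁻¹ :=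
      lt_of_pow_lt_pow_left₀ 2 (by positivity) h3
    rwa [add_comm] at h7
  obtain ⟨k, φ, hk, hφc, hu⟩ := hap sfun
  have hφ0 : ∀ t, φ t = 0 := by
    intro t
    have h1 : Tendsto (fun n => h (t + sfun (k n))) atTop (𝓝 (φ t)) := hu.tendsto_at t
    have h2 : Tendsto (fun n => h (t + sfun (k n))) atTop (𝓝 0) := by
      apply squeeze_zero_norm' (a := fun n : ℕ => ((n : ℝ) + 1)⁻¹)
      · filter_upwards [eventually_ge_atTop ⌈‖t‖⌉₊] with n hn
        have hkn : n ≤ k n := hk.le_apply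
        have htn : ‖t‖ ≤ (k n : ℕ) := by
          calc ‖t‖ ≤ (⌈‖t‖⌉₊ : ℝ) := Nat.le_ceil _
            _ ≤ (n : ℝ) := by exact_mod_cast hn
            _ ≤ (k n : ℝ) := by exact_mod_cast hkn
        have := (hsmall (k n) t htn).le
        calc ‖h (t + sfun (k n))‖ ≤ ((k n : ℝ) + 1)⁻¹ := this
          _ ≤ ((n : ℝ) + 1)⁻¹ := by
            apply inv_anti₀ (by positivity)
            have : (n : ℝ) ≤ (k n : ℝ) := by exact_mod_cast hkn
            linarith
      · have := tendsto_one_div_add_atTop_nhds_zero_nat (𝕜 := ℝ)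
        simpa [one_div] using this
    exact tendsto_nhds_unique h1 h2
  have hne : h 0 ≠ 0 := by rw [hL 0]; exact Complex.exp_ne_zero _
  have hpos : 0 < ‖h 0‖ := norm_pos_iff.mpr hne
  rw [Metric.tendstoUniformly_iff] at hu
  obtain ⟨n, hn⟩ := (hu (‖h 0‖) hpos).exists
  have hfin := hn (-(sfun (k n)))
  rw [hφ0, neg_add_cancel] at hfin
  rw [dist_eq_norm, zero_sub, norm_neg] at hfin
  exact absurd hfin (lt_irrefl _)
end

section
/- Given d ≥ 1 and, for each j = 1,…,d, an at most countable ℤ-linearly independent family B_j = {β^{(j)}_l : l ∈ L_j} ⊂ ℝ \ {0}, there exist nonzero reals c^{(1)},…,c^{(d)} such that the union {c^{(j)} β^{(j)}_l : l ∈ L_j, j = 1,…,d} is ℤ-linearly independent in ℝ. -/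
set_option maxHeartbeats 1000000
set_option synthInstance.maxHeartbeats 400000


/-- Given, for each `j = 1,…,d`, an at most countable `ℤ`-linearly independent
family of nonzero reals `β^{(j)}`, there exist nonzero reals `c^{(j)}` such that
the combined family `{c^{(j)} β^{(j)}_l}` is `ℤ`-linearly independent. -/
theorem stmt14 (d : ℕ) (hd : 1 ≤ d) (L : Fin d → Type) [∀ j, Countable (L j)]
    (β : ∀ j : Fin d, L j → ℝ)
    (hβ0 : ∀ j l, β j l ≠ 0)
    (hβind : ∀ j, LinearIndependent ℤ (β j)) :
    ∃ c : Fin d → ℝ, (∀ j, c j ≠ 0) ∧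
      LinearIndependent ℤ (fun p : Σ j : Fin d, L j => c p.1 * β p.1 p.2) := by
  classical
  set s : Set ℝ := Set.range (fun p : (Σ j : Fin d, L j) => β p.1 p.2) with hs
  haveI : Countable s := (Set.countable_range _).to_subtype
  set K : Subfield ℝ := Subfield.closure s with hK
  haveI hKcount : Countable K := by
    have h := Subfield.cardinalMk_closure_le_max s
    have h2 : Cardinal.mk K ≤ Cardinal.aleph0 :=
      h.trans (max_le Cardinal.mk_le_aleph0 le_rfl)
    exact Cardinal.mk_le_aleph0_iff.mp h2
  let b := Module.Basis.ofVectorSpace K ℝ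
  haveI : Infinite (Module.Basis.ofVectorSpaceIndex K ℝ) := by
    by_contra h
    rw [not_infinite_iff_finite] at h
    haveI : Countable ℝ := Countable.of_equiv _ b.repr.toEquiv.symm
    exact Cardinal.not_countable_real (Set.to_countable _)
  let f : Fin d ↪ Module.Basis.ofVectorSpaceIndex K ℝ :=
    (Fin.valEmbedding).trans (Infinite.natEmbedding _)
  have hcK : LinearIndependent K (fun j : Fin d => (b (f j) : ℝ)) :=
    b.linearIndependent.comp f f.injective
  refine ⟨fun j => b (f j), fun j => b.ne_zero (f j), ?_⟩
  rw [LinearIndependent.iff_fractionRing ℤ ℚ]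
  have hβK : ∀ j l, β j l ∈ K := fun j l => Subfield.subset_closure ⟨⟨j, l⟩, rfl⟩
  have hspan : ∀ j : Fin d, Submodule.span ℚ (Set.range fun l => (b (f j) : ℝ) * β j l) ≤
      (Submodule.span K {(b (f j) : ℝ)}).restrictScalars ℚ := by
    intro j
    rw [Submodule.span_le]
    rintro x ⟨l, rfl⟩
    have h1 : (⟨β j l, hβK j l⟩ : K) • ((b (f j)) : ℝ) ∈ Submodule.span K {(b (f j) : ℝ)} :=
      Submodule.smul_mem _ _ (Submodule.mem_span_singleton_self _)
    have h2 : (⟨β j l, hβK j l⟩ : K) • ((b (f j)) : ℝ) = (b (f j) : ℝ) * β j l := by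
      show (β j l) • ((b (f j)) : ℝ) = _
      rw [smul_eq_mul, mul_comm]
    rw [h2] at h1
    exact h1
  have hind : iSupIndep (fun j : Fin d => Submodule.span K {(b (f j) : ℝ)}) :=
    hcK.iSupIndep_span_singleton
  apply linearIndependent_iUnion_finite (R := ℚ) (f := fun j l => (b (f j) : ℝ) * β j l)
  · intro j
    have h1 : LinearIndependent ℚ (β j) := (LinearIndependent.iff_fractionRing ℤ ℚ).mp (hβind j)
    have hker : LinearMap.ker (LinearMap.mulLeft ℚ ((b (f j)) : ℝ)) = ⊥ := by
      rw [LinearMap.ker_eq_bot]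
      exact mul_right_injective₀ (b.ne_zero (f j))
    exact h1.map' (LinearMap.mulLeft ℚ ((b (f j)) : ℝ)) hker
  · intro i t ht hit
    have hdisjK : Disjoint (Submodule.span K {(b (f i) : ℝ)})
        (⨆ j ∈ t, Submodule.span K {(b (f j) : ℝ)}) := hind.disjoint_biSup hit
    have hdisjQ : Disjoint ((Submodule.span K {(b (f i) : ℝ)}).restrictScalars ℚ)
        ((⨆ j ∈ t, Submodule.span K {(b (f j) : ℝ)}).restrictScalars ℚ) := by
      rw [Submodule.disjoint_def] at hdisjK ⊢
      exact hdisjK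
    refine hdisjQ.mono (hspan i) ?_
    refine iSup₂_le fun j hj => (hspan j).trans ?_
    intro x hx
    exact le_biSup (fun j => Submodule.span K {(b (f j) : ℝ)}) hj hx
end
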